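/- arXiv:1904.02541 — 3 statements merged into one kernel-verified Lean document; each statement's English description precedes it below -/
import Mathlib

section
/- Let x : V → {0,1}. If for all i < j and all k ∈ N(i) ∪ N(j) with d(i,k)+d(k,j)=d(i,j) we have x_k − x_i − x_j ≥ −1, then for all i < j and ALL k ∈ V with d(i,k)+d(k,j)=d(i,j) we have x_k − x_i − x_j ≥ −1. -/
private lemma step_aux {n : ℕ} (G : SimpleGraph (Fin n)) (hG : G.Connected)
    {i k : Fin n} (hd : G.dist i k ≠ 0) :
    ∃ u, G.Adj i u ∧ G.dist u k = G.dist i k - 1 := by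
  obtain ⟨p, hp⟩ := (hG i k).exists_walk_length_eq_dist
  cases p with
  | nil => exact absurd SimpleGraph.dist_self hd
  | @cons _ u _ ha q =>
    refine ⟨u, ha, le_antisymm ?_ ?_⟩
    · calc G.dist u k ≤ q.length := SimpleGraph.dist_le q
        _ = G.dist i k - 1 := by simp at hp; omega
    · have h1 : G.dist i k ≤ G.dist i u + G.dist u k := hG.dist_triangle
      have h2 : G.dist i u ≤ 1 := by
        simpa using SimpleGraph.dist_le (SimpleGraph.Walk.cons ha SimpleGraph.Walk.nil)
      omega

private lemma key {n : ℕ} (G : SimpleGraph (Fin n)) (hG : G.Connected)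
    (x : Fin n → ℤ) (hx : ∀ i, x i = 0 ∨ x i = 1)
    (h : ∀ i j k : Fin n, i < j → k ∈ G.neighborSet i ∪ G.neighborSet j →
      G.dist i k + G.dist k j = G.dist i j → x k - x i - x j ≥ -1) :
    ∀ d : ℕ, ∀ i j k : Fin n, x i = 1 → x j = 1 → G.dist i k = d →
      G.dist i k + G.dist k j = G.dist i j → x k = 1 := by
  have h' : ∀ i j k : Fin n, i ≠ j → G.Adj i k →
      G.dist i k + G.dist k j = G.dist i j → x k - x i - x j ≥ -1 := by
    intro i j k hij ha hdist
    rcases lt_or_gt_of_ne hij with hlt | hgt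
    · exact h i j k hlt (Or.inl ha) hdist
    · have := h j i k hgt (Or.inr ha) (by
        rw [SimpleGraph.dist_comm (u := j) (v := k), SimpleGraph.dist_comm (u := k) (v := i),
          SimpleGraph.dist_comm (u := j) (v := i)]; omega)
      linarith
  intro d
  induction d using Nat.strong_induction_on with
  | _ d ih =>
    intro i j k hxi hxj hdik hdist
    rcases Nat.eq_zero_or_pos d with rfl | hdpos
    · have : i = k := by
        have := hG.dist_eq_zero_iff (u := i) (v := k)
        tauto
      rwa [← this]
    · have hik : G.dist i k ≠ 0 := by omega
      obtain ⟨u, hadj, hu⟩ := step_aux G hG hik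
      have hiu0 : G.dist i u ≠ 0 := fun hz => hadj.ne (hG.dist_eq_zero_iff.mp hz)
      have hiu1 : G.dist i u ≤ 1 := by
        simpa using SimpleGraph.dist_le (SimpleGraph.Walk.cons hadj SimpleGraph.Walk.nil)
      have hij : i ≠ j := by
        rintro rfl
        have hc : G.dist k i = G.dist i k := SimpleGraph.dist_comm
        have h0 : G.dist i i = 0 := SimpleGraph.dist_self
        omega
      have huj : G.dist u j = G.dist i j - 1 := by
        have h1 : G.dist u j ≤ G.dist u k + G.dist k j := hG.dist_triangle
        have h2 : G.dist i j ≤ G.dist i u + G.dist u j := hG.dist_triangle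
        omega
      have hxu : x u = 1 := by
        have := h' i j u hij hadj (by omega)
        rcases hx u with h0 | h1
        · rw [h0] at this; rw [hxi, hxj] at this; omega
        · exact h1
      exact ih (d - 1) (by omega) u j k hxu hxj (by omega) (by omega)

/-- Lemma 2 of the paper: if the convexity constraints `x_k - x_i - x_j ≥ -1` hold for all
`i < j` and all `k ∈ N(i) ∪ N(j)` lying on a shortest `i-j` path, then they hold for all
`i < j` and ALL `k ∈ V` lying on a shortest `i-j` path. -/
theorem stmt3 {n : ℕ} (G : SimpleGraph (Fin n)) (hG : G.Connected)
    (x : Fin n → ℤ) (hx : ∀ i, x i = 0 ∨ x i = 1)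
    (h : ∀ i j k : Fin n, i < j → k ∈ G.neighborSet i ∪ G.neighborSet j →
      G.dist i k + G.dist k j = G.dist i j → x k - x i - x j ≥ -1) :
    ∀ i j k : Fin n, i < j → G.dist i k + G.dist k j = G.dist i j →
      x k - x i - x j ≥ -1 := by
  intro i j k hij hdist
  rcases hx i with hi | hi
  · rcases hx j with hj | hj <;> rcases hx k with hk | hk <;> simp [hi, hj, hk]
  · rcases hx j with hj | hj
    · rcases hx k with hk | hk <;> simp [hi, hj, hk]
    · have hk : x k = 1 := key G hG x hx h (G.dist i k) i j k hi hj rfl hdist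
      simp [hi, hj, hk]
end

section
/- The optimal value of the ILP with full convexity constraints (over all triples i<j, k∈V with d(i,k)+d(k,j)=d(i,j)) equals the optimal value of the ILP where the convexity constraints are restricted to k ∈ N(i) ∪ N(j). -/
/-- Restricted convexity constraints imply the full convexity constraints. -/
lemma stmt7_key {n : ℕ} (G : SimpleGraph (Fin n)) [DecidableRel G.Adj] (hG : G.Connected)
    (x : Fin n → ℤ) (hb : ∀ i, x i = 0 ∨ x i = 1)
    (hR : ∀ i j k : Fin n, i < j → k ∈ G.neighborSet i ∪ G.neighborSet j →
        G.dist i k + G.dist k j = G.dist i j → x k - x i - x j ≥ -1) :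
    ∀ i j k : Fin n, G.dist i k + G.dist k j = G.dist i j → x k - x i - x j ≥ -1 := by
  -- symmetrized restricted constraint
  have hR2 : ∀ i j k : Fin n, i ≠ j → (G.Adj i k ∨ G.Adj j k) →
      G.dist i k + G.dist k j = G.dist i j → x k - x i - x j ≥ -1 := by
    intro i j k hne hadj hd
    rcases lt_or_gt_of_ne hne with h | h
    · refine hR i j k h ?_ hd
      rcases hadj with h1 | h1
      · exact Or.inl h1
      · exact Or.inr h1
    · have e1 : G.dist j k = G.dist k j := SimpleGraph.dist_comm
      have e2 : G.dist k i = G.dist i k := SimpleGraph.dist_comm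
      have e3 : G.dist j i = G.dist i j := SimpleGraph.dist_comm
      have hd' : G.dist j k + G.dist k i = G.dist j i := by omega
      have hmem : k ∈ G.neighborSet j ∪ G.neighborSet i := by
        rcases hadj with h1 | h1
        · exact Or.inr h1
        · exact Or.inl h1
      have := hR j i k h hmem hd'
      linarith
  -- main induction on dist i j
  suffices H : ∀ d : ℕ, ∀ i j k : Fin n, G.dist i j = d →
      G.dist i k + G.dist k j = G.dist i j → x k - x i - x j ≥ -1 by
    intro i j k hd
    exact H (G.dist i j) i j k rfl hd
  intro d
  induction d using Nat.strong_induction_on with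
  | _ d IH =>
    intro i j k hdij hd
    rcases hb i with hi | hi
    · rcases hb j with hj | hj <;> rcases hb k with hk | hk <;> omega
    rcases hb j with hj | hj
    · rcases hb k with hk | hk <;> omega
    rcases hb k with hk | hk
    · -- bad case: x i = x j = 1, x k = 0; derive contradiction
      exfalso
      have hki : k ≠ i := by rintro rfl; omega
      have hkj : k ≠ j := by rintro rfl; omega
      have hik : 0 < G.dist i k := hG.pos_dist_of_ne (Ne.symm hki)
      have hkjd : 0 < G.dist k j := hG.pos_dist_of_ne hkj
      have hij : i ≠ j := by
        intro h
        subst h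
        rw [G.dist_self] at hd
        omega
      obtain ⟨p, hp⟩ := hG.exists_walk_length_eq_dist i k
      cases p with
      | nil => simp at hp; omega
      | cons ha q =>
        rename_i a
        have hq : q.length = G.dist i k - 1 := by
          simp [SimpleGraph.Walk.length_cons] at hp; omega
        have hak : G.dist a k ≤ G.dist i k - 1 := by
          have := G.dist_le q; omega
        have hak' : G.dist a k = G.dist i k - 1 := by
          have h1 : G.dist i k ≤ G.dist i a + G.dist a k := hG.dist_triangle
          have h2 : G.dist i a ≤ 1 := by
            have := G.dist_le (ha.toWalk); simpa using this
          omega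
        by_cases hakk : a = k
        · -- k is adjacent to i
          subst hakk
          have := hR2 i j a hij (Or.inl ha) hd
          omega
        · -- a is a strictly closer vertex on a shortest path
          have haj : G.dist a j = d - 1 := by
            have h1 : G.dist a j ≤ G.dist a k + G.dist k j := hG.dist_triangle
            have h2 : G.dist i j ≤ G.dist i a + G.dist a j := hG.dist_triangle
            have h3 : G.dist i a ≤ 1 := by
              have := G.dist_le (ha.toWalk); simpa using this
            omega
          have hd2 : 2 ≤ d := by omega
          have haj' : a ≠ j := by
            intro h; rw [h, G.dist_self] at haj; omega
          have hia : G.dist i a = 1 := SimpleGraph.dist_eq_one_iff_adj.mpr ha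
          -- x a = 1 from the restricted constraint
          have hxa : x a - x i - x j ≥ -1 := by
            refine hR2 i j a hij (Or.inl ha) ?_
            omega
          have hxa1 : x a = 1 := by rcases hb a with h | h <;> omega
          -- apply induction hypothesis to (a, j, k)
          have := IH (d - 1) (by omega) a j k haj (by omega)
          omega
    · omega

/-- Theorem 1 of the paper: the optimal value of the ILP with the full convexity
constraints (over all `i < j` and all `k ∈ V` on a shortest `i-j` path) equals the optimal
value of the ILP where the convexity constraints are restricted to `k ∈ N(i) ∪ N(j)`. -/
theorem stmt7 {n : ℕ} (G : SimpleGraph (Fin n)) [DecidableRel G.Adj] (hG : G.Connected) :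
    sInf {s : ℕ | ∃ x : Fin n → ℤ,
        ((∀ i, x i = 0 ∨ x i = 1) ∧
         (∀ i : Fin n, x i + ∑ j ∈ G.neighborFinset i, x j ≥ 1) ∧
         (∀ i j k : Fin n, i < j → G.dist i k + G.dist k j = G.dist i j →
            x k - x i - x j ≥ -1)) ∧
        ∑ i, x i = (s : ℤ)} =
    sInf {s : ℕ | ∃ x : Fin n → ℤ,
        ((∀ i, x i = 0 ∨ x i = 1) ∧
         (∀ i : Fin n, x i + ∑ j ∈ G.neighborFinset i, x j ≥ 1) ∧
         (∀ i j k : Fin n, i < j → k ∈ G.neighborSet i ∪ G.neighborSet j →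
            G.dist i k + G.dist k j = G.dist i j → x k - x i - x j ≥ -1)) ∧
        ∑ i, x i = (s : ℤ)} := by
  congr 1
  ext s
  constructor
  · rintro ⟨x, ⟨hb, hdom, hfull⟩, hsum⟩
    exact ⟨x, ⟨hb, hdom, fun i j k hij _ hd => hfull i j k hij hd⟩, hsum⟩
  · rintro ⟨x, ⟨hb, hdom, hres⟩, hsum⟩
    exact ⟨x, ⟨hb, hdom, fun i j k _ hd => stmt7_key G hG x hb hres i j k hd⟩, hsum⟩
end

section
/- A binary vector x satisfies, for all i < j, the constraint −x_i − x_j + Σ_{k∈N(j), d(i,k)+d(k,j)=d(i,j)} x_k ≥ −1 if and only if W = {i : x_i = 1} is a weakly convex set of G. -/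
/-- `W` is weakly convex: every pair of its vertices is joined by some shortest path of `G`
all of whose vertices lie in `W`. -/
def WeaklyConvexSet {V : Type*} (G : SimpleGraph V) (W : Set V) : Prop :=
  ∀ u ∈ W, ∀ v ∈ W, ∃ p : G.Walk u v, p.length = G.dist u v ∧ ∀ x ∈ p.support, x ∈ W

/-- A binary vector `x` satisfies, for all `i < j`, the constraint
`-x_i - x_j + Σ_{k ∈ N(j), d(i,k)+d(k,j)=d(i,j)} x_k ≥ -1`
iff `W = {i : x_i = 1}` is a weakly convex set of `G`. -/
theorem stmt8 {n : ℕ} (G : SimpleGraph (Fin n)) [DecidableRel G.Adj] (hG : G.Connected)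
    (x : Fin n → ℤ) (hx : ∀ i, x i = 0 ∨ x i = 1) :
    (∀ i j : Fin n, i < j →
        -x i - x j + ∑ k ∈ (G.neighborFinset j).filter
          (fun k => G.dist i k + G.dist k j = G.dist i j), x k ≥ -1) ↔
      WeaklyConvexSet G {i : Fin n | x i = 1} := by
  constructor
  · intro h
    -- key consequence of the constraint (for a < b)
    have key : ∀ a b : Fin n, a < b → x a = 1 → x b = 1 →
        ∃ k, G.Adj b k ∧ G.dist a k + 1 = G.dist a b ∧ x k = 1 := by
      intro a b hlt hxa hxb
      have hc := h a b hlt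
      rw [hxa, hxb] at hc
      have hsum : (1 : ℤ) ≤ ∑ k ∈ (G.neighborFinset b).filter
          (fun k => G.dist a k + G.dist k b = G.dist a b), x k := by linarith
      by_contra hcon
      push_neg at hcon
      have : ∑ k ∈ (G.neighborFinset b).filter
          (fun k => G.dist a k + G.dist k b = G.dist a b), x k = 0 := by
        apply Finset.sum_eq_zero
        intro k hk
        simp only [Finset.mem_filter, SimpleGraph.mem_neighborFinset] at hk
        rcases hx k with h0 | h1
        · exact h0
        · exfalso
          have hkb : G.dist k b = 1 := SimpleGraph.dist_eq_one_iff_adj.mpr hk.1.symm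
          exact hcon k hk.1 (by omega) h1
      omega
    have main : ∀ m : ℕ, ∀ i j : Fin n, x i = 1 → x j = 1 → G.dist i j = m →
        ∃ p : G.Walk i j, p.length = m ∧ ∀ y ∈ p.support, x y = 1 := by
      intro m
      induction m using Nat.strong_induction_on with
      | _ m ih =>
        intro i j hxi hxj hd
        by_cases hij : i = j
        · subst hij
          have : G.dist i i = 0 := by simp
          refine ⟨SimpleGraph.Walk.nil, by simp; omega, by simp [hxi]⟩
        · have hm : 0 < m := by
            have := hG.pos_dist_of_ne hij
            omega
          rcases lt_or_gt_of_ne hij with hlt | hgt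
          · obtain ⟨k, hadj, hdk, hxk⟩ := key i j hlt hxi hxj
            have hlt' : G.dist i k < m := by omega
            obtain ⟨p, hlen, hsup⟩ := ih (G.dist i k) hlt' i k hxi hxk rfl
            refine ⟨p.concat hadj.symm, ?_, ?_⟩
            · rw [SimpleGraph.Walk.length_concat]; omega
            · intro y hy
              rw [SimpleGraph.Walk.support_concat,
                List.mem_append] at hy
              rcases hy with hy | hy
              · exact hsup y hy
              · simp at hy; subst hy; exact hxj
          · obtain ⟨k, hadj, hdk, hxk⟩ := key j i hgt hxj hxi
            have hdji : G.dist j i = m := by rwa [SimpleGraph.dist_comm]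
            have hlt' : G.dist j k < m := by omega
            obtain ⟨p, hlen, hsup⟩ := ih (G.dist j k) hlt' j k hxj hxk rfl
            refine ⟨(p.concat hadj.symm).reverse, ?_, ?_⟩
            · rw [SimpleGraph.Walk.length_reverse, SimpleGraph.Walk.length_concat]
              omega
            · intro y hy
              rw [SimpleGraph.Walk.support_reverse, List.mem_reverse,
                SimpleGraph.Walk.support_concat,
                List.mem_append] at hy
              rcases hy with hy | hy
              · exact hsup y hy
              · simp at hy; subst hy; exact hxi
    intro u hu v hv
    simp only [Set.mem_setOf_eq] at hu hv
    obtain ⟨p, hlen, hsup⟩ := main (G.dist u v) u v hu hv rfl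
    exact ⟨p, hlen, fun y hy => hsup y hy⟩
  · intro hW i j hij
    rcases hx i with hi0 | hi1
    · have hs : (0:ℤ) ≤ ∑ k ∈ (G.neighborFinset j).filter
          (fun k => G.dist i k + G.dist k j = G.dist i j), x k :=
        Finset.sum_nonneg fun k _ => by rcases hx k with h | h <;> omega
      rcases hx j with h | h <;> (rw [hi0]; omega)
    rcases hx j with hj0 | hj1
    · have hs : (0:ℤ) ≤ ∑ k ∈ (G.neighborFinset j).filter
          (fun k => G.dist i k + G.dist k j = G.dist i j), x k :=
        Finset.sum_nonneg fun k _ => by rcases hx k with h | h <;> omega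
      rw [hi1, hj0]; omega
    · obtain ⟨p, hlen, hsup⟩ := hW i (by simpa using hi1) j (by simpa using hj1)
      have hdpos : 0 < G.dist i j := hG.pos_dist_of_ne hij.ne
      have hq := p.reverse
      obtain ⟨k, hadj, q', hq'⟩ := SimpleGraph.Walk.exists_eq_cons_of_ne hij.ne.symm p.reverse
      have hkj : G.dist k j = 1 := SimpleGraph.dist_eq_one_iff_adj.mpr hadj.symm
      have hdik : G.dist i k ≤ p.length - 1 := by
        have := SimpleGraph.dist_le q'.reverse
        have hlq : q'.length = p.length - 1 := by
          have : p.reverse.length = q'.length + 1 := by rw [hq']; simp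
          rw [SimpleGraph.Walk.length_reverse] at this
          omega
        rw [SimpleGraph.Walk.length_reverse] at this
        omega
      have htri : G.dist i j ≤ G.dist i k + G.dist k j := hG.dist_triangle
      have hdik' : G.dist i k + G.dist k j = G.dist i j := by omega
      have hkW : x k = 1 := by
        have : k ∈ p.support := by
          have : k ∈ p.reverse.support := by rw [hq']; simp
          rwa [SimpleGraph.Walk.support_reverse, List.mem_reverse] at this
        simpa using hsup k this
      have hmem : k ∈ (G.neighborFinset j).filter
          (fun k => G.dist i k + G.dist k j = G.dist i j) := by
        simp [SimpleGraph.mem_neighborFinset, hadj, hdik']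
      have hs : (1:ℤ) ≤ ∑ k ∈ (G.neighborFinset j).filter
          (fun k => G.dist i k + G.dist k j = G.dist i j), x k := by
        rw [← hkW]
        exact Finset.single_le_sum (fun m _ => by rcases hx m with h | h <;> omega) hmem
      rw [hi1, hj1]; omega
end
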